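/- arXiv:2211.11107 — 2 statements merged into one kernel-verified Lean document; each statement's English description precedes it below -/
import Mathlib

section
/- Let (X,d) be a compact metric space, 0 < ε < 1, and let F, F' be closed subsets of X with Hausdorff distance Haus(F,F') < ε². Let f : X → ℝ be 1-Lipschitz with ‖f‖_∞ ≤ 1 and f vanishing on F'. Then there exists g : X → ℝ which is 1-Lipschitz, satisfies ‖g‖_∞ ≤ ‖f‖_∞, vanishes on F ∪ F', and satisfies ‖f - g‖_∞ ≤ 8ε. -/
open Metric

private lemma my_le_infDist {α : Type*} [MetricSpace α] {s : Set α} (hs : s.Nonempty)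
    {x : α} {c : ℝ} (h : ∀ y ∈ s, c ≤ dist x y) : c ≤ infDist x s := by
  by_contra hc
  push_neg at hc
  obtain ⟨y, hy, hlt⟩ := (infDist_lt_iff hs).1 hc
  exact absurd hlt (not_lt.2 (h y hy))

/-- McShane-type approximation: if `Haus(F,F') < ε²` with
`0 < ε < 1`, and `f ∈ C(X,ℝ)` is 1-Lipschitz with `‖f‖ ≤ 1` vanishing on `F'`,
then there is a 1-Lipschitz `g` with `‖g‖ ≤ ‖f‖`, vanishing on `F ∪ F'`, and
`‖f - g‖ ≤ 8ε`. -/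
theorem mcshane_approximation {X : Type*} [MetricSpace X] [CompactSpace X]
    (ε : ℝ) (hε0 : 0 < ε) (hε1 : ε < 1)
    (F F' : Set X) (hF : IsClosed F) (hF' : IsClosed F')
    (hFne : F.Nonempty) (hF'ne : F'.Nonempty)
    (hHaus : hausdorffDist F F' < ε ^ 2)
    (f : C(X, ℝ)) (hf : LipschitzWith 1 f) (hfnorm : ‖f‖ ≤ 1)
    (hvan : ∀ z ∈ F', f z = 0) :
    ∃ g : C(X, ℝ), LipschitzWith 1 g ∧ ‖g‖ ≤ ‖f‖ ∧
      (∀ x ∈ F ∪ F', g x = 0) ∧ ‖f - g‖ ≤ 8 * ε := by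
  set d : X → ℝ := fun x => infDist x (F ∪ F') with hd
  have hdlip : LipschitzWith 1 d := lipschitz_infDist_pt _
  have hd0 : ∀ x, 0 ≤ d x := fun x => infDist_nonneg
  set gfun : X → ℝ := fun x => max (-(d x)) (min (f x) (d x)) with hg
  have hglip : LipschitzWith 1 gfun := by
    have h1 : LipschitzWith 1 fun x => min (f x) (d x) := by
      simpa using hf.min hdlip
    simpa using hdlip.neg.max h1
  have habs : ∀ x, |gfun x| ≤ |f x| := by
    intro x
    rw [abs_le]
    constructor
    · exact le_max_of_le_right (le_min (neg_abs_le _)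
        ((neg_nonpos_of_nonneg (abs_nonneg _)).trans (hd0 x)))
    · exact max_le ((neg_nonpos_of_nonneg (hd0 x)).trans (abs_nonneg _))
        ((min_le_left _ _).trans (le_abs_self _))
  refine ⟨⟨gfun, hglip.continuous⟩, hglip, ?_, ?_, ?_⟩
  · rw [ContinuousMap.norm_le _ (norm_nonneg f)]
    intro x
    calc ‖gfun x‖ = |gfun x| := rfl
      _ ≤ |f x| := habs x
      _ = ‖f x‖ := rfl
      _ ≤ ‖f‖ := f.norm_coe_le_norm x
  · intro x hx
    have hdx : d x = 0 := infDist_zero_of_mem hx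
    show max (-(d x)) (min (f x) (d x)) = 0
    rw [hdx, neg_zero]
    rcases le_or_gt (f x) 0 with h | h
    · simp [min_eq_left h, max_eq_left h]
    · simp [min_eq_right h.le]
  · rw [ContinuousMap.norm_le _ (by positivity)]
    intro x
    have hfle : |f x| ≤ infDist x F' := by
      apply my_le_infDist hF'ne
      intro y hy
      have := hf.dist_le_mul x y
      rw [Real.dist_eq, hvan y hy, sub_zero] at this
      simpa using this
    have hfin : EMetric.hausdorffEdist F F' ≠ ⊤ :=
      hausdorffEdist_ne_top_of_nonempty_of_bounded hFne hF'ne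
        hF.isCompact.isBounded hF'.isCompact.isBounded
    have hFF' : infDist x F' ≤ infDist x F + ε ^ 2 := by
      have h := infDist_le_infDist_add_hausdorffDist (x := x) (s := F) (t := F') hfin
      linarith
    have hmin : min (infDist x F) (infDist x F') ≤ d x := by
      apply my_le_infDist (hFne.mono Set.subset_union_left)
      intro y hy
      rcases hy with hy | hy
      · exact (min_le_left _ _).trans (infDist_le_dist_of_mem hy)
      · exact (min_le_right _ _).trans (infDist_le_dist_of_mem hy)
    have hkey : infDist x F' ≤ d x + ε ^ 2 := by
      rcases le_total (infDist x F) (infDist x F') with h | h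
      · rw [min_eq_left h] at hmin; linarith
      · rw [min_eq_right h] at hmin; nlinarith
    have hfd : |f x| - d x ≤ ε ^ 2 := by linarith
    have hdiff : |f x - gfun x| ≤ ε ^ 2 := by
      have hgx : gfun x = max (-(d x)) (min (f x) (d x)) := rfl
      rw [hgx]
      rcases le_or_gt (f x) (d x) with h1 | h1
      · rcases le_or_gt (-(d x)) (f x) with h2 | h2
        · rw [min_eq_left h1, max_eq_right h2]
          simpa using sq_nonneg ε
        · rw [min_eq_left h1, max_eq_left h2.le]
          have habs' : |f x| = -(f x) :=
            abs_of_neg (lt_of_lt_of_le h2 (neg_nonpos_of_nonneg (hd0 x)))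
          rw [abs_le]
          constructor <;> [nlinarith [hd0 x]; nlinarith [hd0 x]]
      · rw [min_eq_right h1.le, max_eq_right (by linarith [hd0 x] : -(d x) ≤ d x)]
        have habs' : |f x| = f x := abs_of_pos (lt_of_le_of_lt (hd0 x) h1)
        rw [abs_le]
        constructor <;> [nlinarith [hd0 x]; nlinarith [hd0 x]]
    have hε2 : ε ^ 2 ≤ 8 * ε := by nlinarith
    calc ‖(f - ⟨gfun, hglip.continuous⟩ : C(X, ℝ)) x‖ = |f x - gfun x| := by
          simp [Real.norm_eq_abs]
      _ ≤ ε ^ 2 := hdiff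
      _ ≤ 8 * ε := hε2
end

section
/- Let (X,d) be a compact metric space and (F_n) a sequence of nonempty closed subsets converging to a nonempty closed subset F in the Hausdorff distance. For each n let B_n = { f ∈ I_{F_n} : ‖f‖_∞ ≤ 1, L_d(Re f) ≤ 1, L_d(Im f) ≤ 1 } and similarly B for F, where I_F is the ideal of continuous complex functions vanishing on F. Then Haus_{‖·‖_∞}(B_n, B) → 0 as n → ∞; in particular, if Haus(F_n,F) < ε² with 0 < ε < 1 then Haus_{‖·‖_∞}(B_n, B) ≤ 8ε. -/
open Metric Filter

/-- The closed unit ball for the D-norm associated to the vanishing ideal of a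
closed set `F ⊆ X`: continuous complex functions vanishing on `F`, with sup norm
at most 1 and real and imaginary parts 1-Lipschitz. -/
def modularBall {X : Type*} [MetricSpace X] [CompactSpace X] (F : Set X) :
    Set C(X, ℂ) :=
  {f : C(X, ℂ) | (∀ x ∈ F, f x = 0) ∧ ‖f‖ ≤ 1 ∧
    LipschitzWith 1 (fun x => (f x).re) ∧ LipschitzWith 1 (fun x => (f x).im)}

/-!
Let `f ∈ B_F` and `Haus(F, G) ≤ ε²`. The parts `Re f`, `Im f` are 1-Lipschitz and vanish on `F`,
so they are bounded by `dist(·, F) ≤ dist(·, G) + ε²`. Shrink `f` by `1 + ε` and clamp both parts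
into `[-c, c]` with `c = min ((1 + ε)⁻¹, dist(·, G))` (a concrete substitute for the McShane
extension). Clamping between 1-Lipschitz bounds keeps the parts 1-Lipschitz and makes them vanish on
`G`. Where `dist(·, G) ≥ ε` we have `|f| ≤ (1 + ε) dist(·, G)`, so the clamp is inactive and the
result is `f / (1 + ε)`, within `ε` of `f`; where `dist(·, G) < ε`, both functions are `O(ε)` and
`c ≤ min (ε, (1 + ε)⁻¹)` keeps the sup norm at most `1`. Every point of `B_F` is thus within `6ε`
of `B_G`, and symmetrically.
-/

def clampAbs (c t : ℝ) : ℝ := max (-c) (min c t)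

lemma abs_clampAbs_le {c : ℝ} (hc : 0 ≤ c) (t : ℝ) : |clampAbs c t| ≤ c :=
  abs_le.2 ⟨le_max_left _ _, max_le (by linarith) (min_le_left _ _)⟩

lemma clampAbs_eq_self {c t : ℝ} (h : |t| ≤ c) : clampAbs c t = t := by
  rw [abs_le] at h
  rw [clampAbs, min_eq_right h.2, max_eq_right h.1]

section Lipschitz

variable {X : Type*} [PseudoMetricSpace X] {K : NNReal}

lemma LipschitzWith.clampAbs {c u : X → ℝ} (hc : LipschitzWith K c) (hu : LipschitzWith K u) :
    LipschitzWith K fun x => clampAbs (c x) (u x) := by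
  simpa only [_root_.clampAbs, max_self, Pi.neg_apply] using hc.neg.max (hc.min hu)

lemma LipschitzWith.div_const_of_one_le {u : X → ℝ} (hu : LipschitzWith K u) {a : ℝ}
    (ha : 1 ≤ a) : LipschitzWith K fun x => u x / a :=
  LipschitzWith.of_dist_le_mul fun x y =>
    calc dist (u x / a) (u y / a) = dist (u x) (u y) / a := by
          rw [Real.dist_eq, Real.dist_eq, ← sub_div, abs_div, abs_of_pos (zero_lt_one.trans_le ha)]
      _ ≤ dist (u x) (u y) := div_le_self dist_nonneg ha
      _ ≤ K * dist x y := hu.dist_le_mul x y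

lemma LipschitzWith.abs_le_mul_infDist {w : X → ℝ} (hw : LipschitzWith K w) {F : Set X}
    (hF : F.Nonempty) (h0 : ∀ y ∈ F, w y = 0) (x : X) : |w x| ≤ K * infDist x F := by
  have : Nonempty F := hF.to_subtype
  rw [infDist_eq_iInf, Real.mul_iInf_of_nonneg K.coe_nonneg]
  refine le_ciInf fun y => ?_
  simpa [h0 y y.2, Real.dist_eq] using hw.dist_le_mul x y

lemma LipschitzWith.abs_le_infDist_add_hausdorffDist [CompactSpace X] {w : X → ℝ}
    (hw : LipschitzWith 1 w) {F G : Set X} (hF : F.Nonempty) (hG : G.Nonempty)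
    (h0 : ∀ y ∈ F, w y = 0) (x : X) : |w x| ≤ infDist x G + hausdorffDist G F :=
  calc |w x| ≤ infDist x F := by simpa using hw.abs_le_mul_infDist hF h0 x
    _ ≤ infDist x G + hausdorffDist G F := infDist_le_infDist_add_hausdorffDist <|
      hausdorffEDist_ne_top_of_nonempty_of_bounded hG hF isBounded_of_compactSpace
        isBounded_of_compactSpace

end Lipschitz

noncomputable def shrinkClamp (ε d a : ℝ) : ℝ := clampAbs (min (1 + ε)⁻¹ d) (a / (1 + ε))

lemma LipschitzWith.shrinkClamp {X : Type*} [PseudoMetricSpace X] {K : NNReal} {d u : X → ℝ}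
    {ε : ℝ} (hε : 0 ≤ ε) (hd : LipschitzWith K d) (hu : LipschitzWith K u) :
    LipschitzWith K fun x => shrinkClamp ε (d x) (u x) :=
  (hd.const_min _).clampAbs (hu.div_const_of_one_le (by linarith))

section ShrinkClamp

variable {ε d a : ℝ}

lemma abs_shrinkClamp_le (hε : 0 ≤ ε) (hd : 0 ≤ d) (a : ℝ) :
    |shrinkClamp ε d a| ≤ min (1 + ε)⁻¹ d :=
  abs_clampAbs_le (le_min (by positivity) hd) _

lemma shrinkClamp_eq_div (hε : 0 < ε) (ha : |a| ≤ 1) (had : |a| ≤ d + ε ^ 2) (hd : ε ≤ d) :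
    shrinkClamp ε d a = a / (1 + ε) := by
  have h1ε : 0 < 1 + ε := by linarith
  refine clampAbs_eq_self ?_
  -- `|a| ≤ d + ε² ≤ d (1 + ε)` because `ε ≤ d`
  rw [abs_div, abs_of_pos h1ε]
  refine le_min ?_ ?_
  · rw [← one_div]; gcongr
  · rw [div_le_iff₀ h1ε]; nlinarith

lemma abs_sub_shrinkClamp_le (hε : 0 < ε) (hd : 0 ≤ d) (ha : |a| ≤ 1)
    (had : |a| ≤ d + ε ^ 2) : |a - shrinkClamp ε d a| ≤ 3 * ε := by
  rcases le_or_gt ε d with hfar | hnear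
  · rw [shrinkClamp_eq_div hε ha had hfar]
    have h1ε : 0 < 1 + ε := by linarith
    calc |a - a / (1 + ε)| = |a| * (ε / (1 + ε)) := by
          rw [← abs_of_pos (div_pos hε h1ε), ← abs_mul]; congr 1; field_simp; ring
      _ ≤ 1 * ε := by gcongr; exact div_le_self hε.le (by linarith)
      _ ≤ 3 * ε := by linarith
  · have hr := (abs_shrinkClamp_le hε.le hd a).trans (min_le_right _ _)
    calc _ ≤ |a| + |shrinkClamp ε d a| := abs_sub _ _
      _ ≤ 3 * ε := by rcases le_or_gt ε 1 with h | h <;> nlinarith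

lemma sq_add_sq_shrinkClamp_le_one {b : ℝ} (hε : 0 < ε) (hε1 : ε ≤ 1) (hd : 0 ≤ d)
    (hab : a ^ 2 + b ^ 2 ≤ 1) (had : |a| ≤ d + ε ^ 2) (hbd : |b| ≤ d + ε ^ 2) :
    shrinkClamp ε d a ^ 2 + shrinkClamp ε d b ^ 2 ≤ 1 := by
  have h1ε : 0 < 1 + ε := by linarith
  have ha : |a| ≤ 1 := (sq_le_one_iff_abs_le_one a).1 (by nlinarith)
  have hb : |b| ≤ 1 := (sq_le_one_iff_abs_le_one b).1 (by nlinarith)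
  rcases le_or_gt ε d with hfar | hnear
  · rw [shrinkClamp_eq_div hε ha had hfar, shrinkClamp_eq_div hε hb hbd hfar, div_pow, div_pow,
      ← add_div, div_le_one (by positivity)]
    nlinarith
  · -- both squares are at most `c² ≤ ε (1 + ε)⁻¹ ≤ 1/2`, where `c = min (1 + ε)⁻¹ d`
    have hr := abs_shrinkClamp_le hε.le hd a
    have hs := abs_shrinkClamp_le hε.le hd b
    set c := min (1 + ε)⁻¹ d
    have hcε : c ≤ ε := (min_le_right _ _).trans hnear.le
    have hc1 : c * (1 + ε) ≤ 1 := by rw [← le_div_iff₀ h1ε, one_div]; exact min_le_left _ _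
    rw [← sq_abs, ← sq_abs (shrinkClamp ε d b)]
    nlinarith [abs_nonneg (shrinkClamp ε d a), abs_nonneg (shrinkClamp ε d b)]

end ShrinkClamp

lemma Complex.norm_le_one_iff_re_sq_add_im_sq_le_one (z : ℂ) :
    ‖z‖ ≤ 1 ↔ z.re ^ 2 + z.im ^ 2 ≤ 1 := by
  rw [Complex.norm_eq_sqrt_sq_add_sq, Real.sqrt_le_one]

section ModularBall

variable {X : Type*} [MetricSpace X] {F G : Set X} {f : C(X, ℂ)} {ε : ℝ}

noncomputable def ballApprox (G : Set X) (ε : ℝ) (f : C(X, ℂ)) : C(X, ℂ) where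
  toFun x :=
    shrinkClamp ε (infDist x G) (f x).re + shrinkClamp ε (infDist x G) (f x).im * Complex.I
  continuous_toFun := by unfold shrinkClamp clampAbs; fun_prop

@[simp]
lemma ballApprox_apply_re (x : X) :
    (ballApprox G ε f x).re = shrinkClamp ε (infDist x G) (f x).re := by
  simp [ballApprox]

@[simp]
lemma ballApprox_apply_im (x : X) :
    (ballApprox G ε f x).im = shrinkClamp ε (infDist x G) (f x).im := by
  simp [ballApprox]

variable [CompactSpace X]

lemma abs_re_le_of_mem_modularBall (hf : f ∈ modularBall F) (hF : F.Nonempty)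
    (hG : G.Nonempty) (x : X) : |(f x).re| ≤ infDist x G + hausdorffDist G F :=
  hf.2.2.1.abs_le_infDist_add_hausdorffDist hF hG (fun y hy => by simp [hf.1 y hy]) x

lemma abs_im_le_of_mem_modularBall (hf : f ∈ modularBall F) (hF : F.Nonempty)
    (hG : G.Nonempty) (x : X) : |(f x).im| ≤ infDist x G + hausdorffDist G F :=
  hf.2.2.2.abs_le_infDist_add_hausdorffDist hF hG (fun y hy => by simp [hf.1 y hy]) x

lemma ballApprox_mem_modularBall (hF : F.Nonempty) (hG : G.Nonempty) (hε : 0 < ε)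
    (hε1 : ε ≤ 1) (hGF : hausdorffDist G F ≤ ε ^ 2) (hf : f ∈ modularBall F) :
    ballApprox G ε f ∈ modularBall G := by
  have hre (x : X) : |(f x).re| ≤ infDist x G + ε ^ 2 :=
    (abs_re_le_of_mem_modularBall hf hF hG x).trans (by gcongr)
  have him (x : X) : |(f x).im| ≤ infDist x G + ε ^ 2 :=
    (abs_im_le_of_mem_modularBall hf hF hG x).trans (by gcongr)
  refine ⟨fun x hx => ?_, (ContinuousMap.norm_le _ zero_le_one).2 fun x => ?_, ?_, ?_⟩
  · have hvanish (a : ℝ) : shrinkClamp ε (infDist x G) a = 0 := by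
      have := abs_shrinkClamp_le hε.le le_rfl a
      rw [min_eq_right (by positivity), abs_nonpos_iff] at this
      rwa [infDist_zero_of_mem hx]
    apply Complex.ext <;> simp [hvanish]
  · have hfx := (Complex.norm_le_one_iff_re_sq_add_im_sq_le_one _).1
      ((f.norm_coe_le_norm x).trans hf.2.1)
    rw [Complex.norm_le_one_iff_re_sq_add_im_sq_le_one, ballApprox_apply_re, ballApprox_apply_im]
    exact sq_add_sq_shrinkClamp_le_one hε hε1 infDist_nonneg hfx (hre x) (him x)
  · simpa using LipschitzWith.shrinkClamp hε.le (lipschitz_infDist_pt G) hf.2.2.1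
  · simpa using LipschitzWith.shrinkClamp hε.le (lipschitz_infDist_pt G) hf.2.2.2

lemma norm_sub_ballApprox_le (hF : F.Nonempty) (hG : G.Nonempty) (hε : 0 < ε)
    (hGF : hausdorffDist G F ≤ ε ^ 2) (hf : f ∈ modularBall F) :
    ‖f - ballApprox G ε f‖ ≤ 6 * ε := by
  have hfx (x : X) : ‖f x‖ ≤ 1 := (f.norm_coe_le_norm x).trans hf.2.1
  have hre (x : X) : |(f x).re - (ballApprox G ε f x).re| ≤ 3 * ε := by
    rw [ballApprox_apply_re]
    exact abs_sub_shrinkClamp_le hε infDist_nonneg ((Complex.abs_re_le_norm _).trans (hfx x))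
      ((abs_re_le_of_mem_modularBall hf hF hG x).trans (by gcongr))
  have him (x : X) : |(f x).im - (ballApprox G ε f x).im| ≤ 3 * ε := by
    rw [ballApprox_apply_im]
    exact abs_sub_shrinkClamp_le hε infDist_nonneg ((Complex.abs_im_le_norm _).trans (hfx x))
      ((abs_im_le_of_mem_modularBall hf hF hG x).trans (by gcongr))
  refine (ContinuousMap.norm_le _ (by positivity)).2 fun x => ?_
  calc ‖f x - ballApprox G ε f x‖
      ≤ |(f x - ballApprox G ε f x).re| + |(f x - ballApprox G ε f x).im| :=
        Complex.norm_le_abs_re_add_abs_im _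
    _ ≤ 6 * ε := by rw [Complex.sub_re, Complex.sub_im]; linarith [hre x, him x]

lemma hausdorffDist_modularBall_le (hF : F.Nonempty) (hG : G.Nonempty) (hε : 0 < ε)
    (hε1 : ε ≤ 1) (hFG : hausdorffDist F G ≤ ε ^ 2) :
    hausdorffDist (modularBall F) (modularBall G) ≤ 6 * ε := by
  have hGF : hausdorffDist G F ≤ ε ^ 2 := by rwa [hausdorffDist_comm]
  refine hausdorffDist_le_of_mem_dist (by positivity) (fun f hf => ?_) (fun g hg => ?_)
  · exact ⟨_, ballApprox_mem_modularBall hF hG hε hε1 hGF hf,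
      (dist_eq_norm _ _).trans_le (norm_sub_ballApprox_le hF hG hε hGF hf)⟩
  · exact ⟨_, ballApprox_mem_modularBall hG hF hε hε1 hFG hg,
      (dist_eq_norm _ _).trans_le (norm_sub_ballApprox_le hG hF hε hFG hg)⟩

end ModularBall

theorem modularBall_hausdorff_convergence_general
    {X : Type*} [MetricSpace X] [CompactSpace X]
    (Fs : ℕ → Set X) (F : Set X)
    (hFsne : ∀ n, (Fs n).Nonempty)
    (hFne : F.Nonempty)
    (hconv : Tendsto (fun n => hausdorffDist (Fs n) F) atTop (nhds 0)) :
    Tendsto (fun n => hausdorffDist (modularBall (Fs n)) (modularBall F))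
      atTop (nhds 0) ∧
    ∀ n, ∀ ε : ℝ, 0 < ε → ε < 1 → hausdorffDist (Fs n) F < ε ^ 2 →
      hausdorffDist (modularBall (Fs n)) (modularBall F) ≤ 8 * ε := by
  refine ⟨Metric.tendsto_nhds.2 fun δ hδ => ?_, fun n ε hε hε1 h =>
    (hausdorffDist_modularBall_le (hFsne n) hFne hε hε1.le h.le).trans (by linarith)⟩
  set ε := min (δ / 7) 1
  have hε : 0 < ε := by positivity
  filter_upwards [hconv.eventually (gt_mem_nhds (pow_pos hε 2))] with n hn
  rw [Real.dist_0_eq_abs, abs_of_nonneg hausdorffDist_nonneg]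
  calc _ ≤ 6 * ε := hausdorffDist_modularBall_le (hFsne n) hFne hε (min_le_right _ _) hn.le
    _ < δ := by linarith [min_le_left (δ / 7) 1]

/-- If nonempty closed sets `F_n → F` in Hausdorff distance, then
the associated unit balls `B_n → B` in Hausdorff distance for the sup norm;
quantitatively, `Haus(F_n, F) < ε²` with `0 < ε < 1` implies
`Haus(B_n, B) ≤ 8ε`. -/
theorem modularBall_hausdorff_convergence
    {X : Type*} [MetricSpace X] [CompactSpace X]
    (Fs : ℕ → Set X) (F : Set X)
    (hFs : ∀ n, IsClosed (Fs n)) (hFsne : ∀ n, (Fs n).Nonempty)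
    (hF : IsClosed F) (hFne : F.Nonempty)
    (hconv : Tendsto (fun n => hausdorffDist (Fs n) F) atTop (nhds 0)) :
    Tendsto (fun n => hausdorffDist (modularBall (Fs n)) (modularBall F))
      atTop (nhds 0) ∧
    ∀ n, ∀ ε : ℝ, 0 < ε → ε < 1 → hausdorffDist (Fs n) F < ε ^ 2 →
      hausdorffDist (modularBall (Fs n)) (modularBall F) ≤ 8 * ε :=
  modularBall_hausdorff_convergence_general Fs F hFsne hFne hconv
end
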